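/- arXiv:2010.05109 — 9 statements merged into one kernel-verified Lean document; each statement's English description precedes it below -/
import Mathlib

section
/- Let (θ_k, r_k) be the global AEGD iterates. Then for every step size η > 0 and every k ≥ 0 the energy identity r_{k+1}² = r_k² − (r_{k+1} − r_k)² − η⁻¹ ‖θ_{k+1} − θ_k‖² holds. -/
open Filter Topology Finset

/-!
Write `D = 1 + 2η‖∇g(θ_k)‖²`. The update gives `r_k = D r_{k+1}` and
`‖θ_{k+1} − θ_k‖² = 4η² r_{k+1}² ‖∇g(θ_k)‖²`, so after dividing by `r_{k+1}²` the identity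
becomes the polynomial identity `D² − (D − 1)² − 4η‖∇g(θ_k)‖² = 1`.
-/

theorem sq_eq_of_eq_div_one_add {η G r r' : ℝ} (hη : 0 < η) (hG : 0 ≤ G)
    (hr : r' = r / (1 + 2 * η * G)) :
    r' ^ 2 = r ^ 2 - (r' - r) ^ 2 - η⁻¹ * ((2 * η * r') ^ 2 * G) := by
  have hD : 0 < 1 + 2 * η * G := by positivity
  have hr' : r = r' * (1 + 2 * η * G) := by
    rw [hr, div_mul_cancel₀ _ hD.ne']
  rw [hr']
  field_simp
  ring

theorem norm_sub_sq_of_eq_sub_smul {E : Type*} [NormedAddCommGroup E] [NormedSpace ℝ E]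
    {x x' v : E} {a : ℝ} (hx : x' = x - a • v) : ‖x' - x‖ ^ 2 = a ^ 2 * ‖v‖ ^ 2 := by
  rw [hx, sub_sub_cancel_left, norm_neg, norm_smul, mul_pow, Real.norm_eq_abs, sq_abs]

theorem aegd_step_energy_identity {E : Type*} [NormedAddCommGroup E] [NormedSpace ℝ E]
    {η r r' : ℝ} {x x' v : E} (hη : 0 < η) (hr : r' = r / (1 + 2 * η * ‖v‖ ^ 2))
    (hx : x' = x - (2 * η * r') • v) :
    r' ^ 2 = r ^ 2 - (r' - r) ^ 2 - η⁻¹ * ‖x' - x‖ ^ 2 := by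
  rw [norm_sub_sq_of_eq_sub_smul hx]
  exact sq_eq_of_eq_div_one_add hη (by positivity) hr

theorem aegd_energy_identity_general {n : ℕ}
    (g : EuclideanSpace ℝ (Fin n) → ℝ)
    (η : ℝ) (hη : 0 < η)
    (θ : ℕ → EuclideanSpace ℝ (Fin n)) (r : ℕ → ℝ)
    (hr : ∀ k, r (k + 1) = r k / (1 + 2 * η * ‖gradient g (θ k)‖ ^ 2))
    (hθ : ∀ k, θ (k + 1) = θ k - (2 * η * r (k + 1)) • gradient g (θ k)) :
    ∀ k : ℕ, (r (k + 1)) ^ 2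
      = (r k) ^ 2 - (r (k + 1) - r k) ^ 2 - η⁻¹ * ‖θ (k + 1) - θ k‖ ^ 2 :=
  fun k => aegd_step_energy_identity hη (hr k) (hθ k)

/-- Energy identity for the global AEGD iterates:
`r_{k+1}² = r_k² − (r_{k+1} − r_k)² − η⁻¹ ‖θ_{k+1} − θ_k‖²` for every step size
`η > 0` and every `k ≥ 0`. -/
theorem aegd_energy_identity {n : ℕ} (f : EuclideanSpace ℝ (Fin n) → ℝ)
    (hf : Differentiable ℝ f) (c : ℝ) (hc : 0 < c) (hfc : ∀ x, 0 < f x + c)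
    (g : EuclideanSpace ℝ (Fin n) → ℝ) (hg : g = fun x => Real.sqrt (f x + c))
    (η : ℝ) (hη : 0 < η)
    (θ : ℕ → EuclideanSpace ℝ (Fin n)) (r : ℕ → ℝ)
    (hr0 : r 0 = g (θ 0))
    (hr : ∀ k, r (k + 1) = r k / (1 + 2 * η * ‖gradient g (θ k)‖ ^ 2))
    (hθ : ∀ k, θ (k + 1) = θ k - (2 * η * r (k + 1)) • gradient g (θ k)) :
    ∀ k : ℕ, (r (k + 1)) ^ 2
      = (r k) ^ 2 - (r (k + 1) - r k) ^ 2 - η⁻¹ * ‖θ (k + 1) - θ k‖ ^ 2 :=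
  aegd_energy_identity_general g η hη θ r hr hθ
end

section
/- Let (θ_k, r_k) be the global AEGD iterates. Then for every step size η > 0: the sequence r_k is nonnegative, non-increasing (strictly decreasing at every step where ∇g(θ_k) ≠ 0), hence convergent to some limit r* ≥ 0; moreover ‖θ_{k+1} − θ_k‖ → 0 as k → ∞, and ∑_{j=0}^{∞} ‖θ_{j+1} − θ_j‖² ≤ η (r₀² − (r*)²). -/
open Filter Topology Finset

/-- For every step size `η > 0`, the energy sequence `r_k` of the global
AEGD iterates is nonnegative, non-increasing (strictly decreasing at every step with
`∇g(θ_k) ≠ 0`), hence converges to some `r* ≥ 0`; moreover `‖θ_{k+1} − θ_k‖ → 0` and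
`∑_{j=0}^∞ ‖θ_{j+1} − θ_j‖² ≤ η (r₀² − (r*)²)`. -/
theorem aegd_energy_stability {n : ℕ} (f : EuclideanSpace ℝ (Fin n) → ℝ)
    (hf : Differentiable ℝ f) (c : ℝ) (hc : 0 < c) (hfc : ∀ x, 0 < f x + c)
    (g : EuclideanSpace ℝ (Fin n) → ℝ) (hg : g = fun x => Real.sqrt (f x + c))
    (η : ℝ) (hη : 0 < η)
    (θ : ℕ → EuclideanSpace ℝ (Fin n)) (r : ℕ → ℝ)
    (hr0 : r 0 = g (θ 0))
    (hr : ∀ k, r (k + 1) = r k / (1 + 2 * η * ‖gradient g (θ k)‖ ^ 2))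
    (hθ : ∀ k, θ (k + 1) = θ k - (2 * η * r (k + 1)) • gradient g (θ k)) :
    (∀ k, 0 ≤ r k) ∧ (∀ k, r (k + 1) ≤ r k) ∧
    (∀ k, gradient g (θ k) ≠ 0 → r (k + 1) < r k) ∧
    ∃ rstar : ℝ, 0 ≤ rstar ∧ Tendsto r atTop (𝓝 rstar) ∧
      Tendsto (fun k => ‖θ (k + 1) - θ k‖) atTop (𝓝 0) ∧
      ∑' j : ℕ, ‖θ (j + 1) - θ j‖ ^ 2 ≤ η * ((r 0) ^ 2 - rstar ^ 2) := by
  have hden : ∀ k, 0 < 1 + 2 * η * ‖gradient g (θ k)‖ ^ 2 := by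
    intro k; positivity
  have hr0pos : 0 < r 0 := by
    rw [hr0, hg]; exact Real.sqrt_pos.mpr (hfc _)
  have hrpos : ∀ k, 0 < r k := by
    intro k; induction k with
    | zero => exact hr0pos
    | succ k ih => rw [hr k]; exact div_pos ih (hden k)
  have hrnn : ∀ k, 0 ≤ r k := fun k => (hrpos k).le
  have hmono : ∀ k, r (k + 1) ≤ r k := by
    intro k; rw [hr k]
    exact div_le_self (hrnn k) (by nlinarith [norm_nonneg (gradient g (θ k)), sq_nonneg ‖gradient g (θ k)‖])
  have hanti : Antitone r := antitone_nat_of_succ_le hmono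
  refine ⟨hrnn, hmono, ?_, ?_⟩
  · intro k hk
    rw [hr k]
    have hG : 0 < ‖gradient g (θ k)‖ := norm_pos_iff.mpr hk
    refine div_lt_self (hrpos k) ?_
    nlinarith [mul_pos hη (pow_pos hG 2)]
  · set rstar := ⨅ k, r k with hrs
    have hbdd : BddBelow (Set.range r) := ⟨0, by rintro x ⟨k, rfl⟩; exact hrnn k⟩
    have hrsnn : 0 ≤ rstar := le_ciInf hrnn
    have htend : Tendsto r atTop (𝓝 rstar) := tendsto_atTop_ciInf hanti hbdd
    have hrsle : ∀ k, rstar ≤ r k := fun k => ciInf_le hbdd k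
    -- key inequality
    have hkey : ∀ k, ‖θ (k + 1) - θ k‖ ^ 2 ≤ η * (r k ^ 2 - r (k + 1) ^ 2) := by
      intro k
      have hnorm : ‖θ (k + 1) - θ k‖ = 2 * η * r (k + 1) * ‖gradient g (θ k)‖ := by
        rw [hθ k]
        rw [sub_sub_cancel_left, norm_neg, norm_smul, Real.norm_eq_abs,
          abs_of_nonneg (by have := hrpos (k+1); positivity : (0:ℝ) ≤ 2 * η * r (k + 1))]
      have hrk : r k = r (k + 1) * (1 + 2 * η * ‖gradient g (θ k)‖ ^ 2) := by
        rw [hr k]; field_simp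
      rw [hnorm, hrk]
      nlinarith [mul_nonneg (pow_pos hη 3).le (sq_nonneg (r (k+1) * ‖gradient g (θ k)‖ ^ 2))]
    have hsum : ∀ N, ∑ j ∈ Finset.range N, ‖θ (j + 1) - θ j‖ ^ 2 ≤ η * (r 0 ^ 2 - rstar ^ 2) := by
      intro N
      have htel : ∑ j ∈ Finset.range N, ‖θ (j + 1) - θ j‖ ^ 2 ≤ η * (r 0 ^ 2 - r N ^ 2) := by
        induction N with
        | zero => simp
        | succ N ih =>
          rw [Finset.sum_range_succ]
          have := hkey N
          nlinarith
      have hsq : rstar ^ 2 ≤ r N ^ 2 := by nlinarith [hrsle N, hrsnn]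
      nlinarith
    have hsummable : Summable (fun j => ‖θ (j + 1) - θ j‖ ^ 2) :=
      summable_of_sum_range_le (fun j => by positivity) hsum
    refine ⟨rstar, hrsnn, htend, ?_, Summable.tsum_le_of_sum_range_le hsummable hsum⟩
    have h0 : Tendsto (fun k => ‖θ (k + 1) - θ k‖ ^ 2) atTop (𝓝 0) :=
      hsummable.tendsto_atTop_zero
    have h1 := (Real.continuous_sqrt.tendsto 0).comp h0
    rw [Real.sqrt_zero] at h1
    exact h1.congr fun k => Real.sqrt_sq (norm_nonneg _)
end

section
/- Let (θ_k, r_{k,i}) be the element-wise AEGD iterates. Then for every step size η > 0, every k ≥ 0 and every coordinate i ∈ {1,…,n}: r_{k+1,i}² = r_{k,i}² − (r_{k+1,i} − r_{k,i})² − η⁻¹ (θ_{k+1,i} − θ_{k,i})²; consequently each r_{k,i} is nonnegative, non-increasing in k, convergent to some r_i* ≥ 0, ‖θ_{k+1} − θ_k‖ → 0 as k → ∞, and ∑_{j=0}^{∞} ‖θ_{j+1} − θ_j‖² ≤ η ∑_{i=1}^{n} (r_{0,i}² − (r_i*)²). -/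
open Filter Topology Finset

/-- Element-wise AEGD: for every step size `η > 0`, every `k ≥ 0` and
every coordinate `i`, the energy identity
`r_{k+1,i}² = r_{k,i}² − (r_{k+1,i} − r_{k,i})² − η⁻¹ (θ_{k+1,i} − θ_{k,i})²` holds;
consequently each `r_{k,i}` is nonnegative, non-increasing in `k`, convergent to some
`r_i* ≥ 0`, `‖θ_{k+1} − θ_k‖ → 0`, and
`∑_{j=0}^∞ ‖θ_{j+1} − θ_j‖² ≤ η ∑_{i=1}^n (r_{0,i}² − (r_i*)²)`. -/
theorem aegd_elementwise_energy_stability {n : ℕ} (f : EuclideanSpace ℝ (Fin n) → ℝ)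
    (hf : Differentiable ℝ f) (c : ℝ) (hc : 0 < c) (hfc : ∀ x, 0 < f x + c)
    (g : EuclideanSpace ℝ (Fin n) → ℝ) (hg : g = fun x => Real.sqrt (f x + c))
    (η : ℝ) (hη : 0 < η)
    (θ : ℕ → EuclideanSpace ℝ (Fin n)) (r : ℕ → Fin n → ℝ)
    (hr0 : ∀ i, r 0 i = g (θ 0))
    (hr : ∀ k i, r (k + 1) i = r k i / (1 + 2 * η * (gradient g (θ k) i) ^ 2))
    (hθ : ∀ k i, θ (k + 1) i = θ k i - 2 * η * r (k + 1) i * gradient g (θ k) i) :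
    (∀ k : ℕ, ∀ i : Fin n, (r (k + 1) i) ^ 2
      = (r k i) ^ 2 - (r (k + 1) i - r k i) ^ 2 - η⁻¹ * (θ (k + 1) i - θ k i) ^ 2) ∧
    (∀ k i, 0 ≤ r k i) ∧ (∀ k i, r (k + 1) i ≤ r k i) ∧
    ∃ rstar : Fin n → ℝ, (∀ i, 0 ≤ rstar i) ∧
      (∀ i, Tendsto (fun k => r k i) atTop (𝓝 (rstar i))) ∧
      Tendsto (fun k => ‖θ (k + 1) - θ k‖) atTop (𝓝 0) ∧
      ∑' j : ℕ, ‖θ (j + 1) - θ j‖ ^ 2 ≤ η * ∑ i, ((r 0 i) ^ 2 - (rstar i) ^ 2) := by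
  have hdpos : ∀ k (i : Fin n), (0:ℝ) < 1 + 2 * η * (gradient g (θ k) i) ^ 2 := by
    intro k i; positivity
  -- energy identity
  have hmain : ∀ k : ℕ, ∀ i : Fin n, (r (k + 1) i) ^ 2
      = (r k i) ^ 2 - (r (k + 1) i - r k i) ^ 2 - η⁻¹ * (θ (k + 1) i - θ k i) ^ 2 := by
    intro k i
    have h1 := (hdpos k i).ne'
    rw [hθ k i, hr k i]
    field_simp
    ring
  -- nonnegativity
  have hnn : ∀ k (i : Fin n), 0 ≤ r k i := by
    intro k
    induction k with
    | zero => intro i; rw [hr0 i, hg]; exact Real.sqrt_nonneg _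
    | succ k ih =>
      intro i
      rw [hr k i]
      exact div_nonneg (ih i) (hdpos k i).le
  -- monotone decrease
  have hmono : ∀ k (i : Fin n), r (k + 1) i ≤ r k i := by
    intro k i
    rw [hr k i]
    apply div_le_self (hnn k i)
    nlinarith [sq_nonneg (gradient g (θ k) i)]
  have hanti : ∀ i : Fin n, Antitone (fun k => r k i) :=
    fun i => antitone_nat_of_succ_le (fun k => hmono k i)
  have hbdd : ∀ i : Fin n, BddBelow (Set.range fun k => r k i) :=
    fun i => ⟨0, by rintro x ⟨k, rfl⟩; exact hnn k i⟩
  set rstar : Fin n → ℝ := fun i => ⨅ k, r k i with hrstar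
  have hconv : ∀ i, Tendsto (fun k => r k i) atTop (𝓝 (rstar i)) :=
    fun i => tendsto_atTop_ciInf (hanti i) (hbdd i)
  have hrstar_nn : ∀ i, 0 ≤ rstar i :=
    fun i => le_ciInf (fun k => hnn k i)
  have hrstar_le : ∀ k i, rstar i ≤ r k i :=
    fun k i => ciInf_le (hbdd i) k
  refine ⟨hmain, hnn, hmono, rstar, hrstar_nn, hconv, ?_, ?_⟩
  -- pointwise norm-squared bound
  · have hnorm_sq : ∀ k : ℕ, ‖θ (k + 1) - θ k‖ ^ 2
        = ∑ i, (θ (k + 1) i - θ k i) ^ 2 := by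
      intro k
      rw [EuclideanSpace.norm_eq]
      rw [Real.sq_sqrt (by positivity)]
      refine Finset.sum_congr rfl fun i _ => ?_
      rw [Real.norm_eq_abs, sq_abs]
      congr 1
    have hbound : ∀ k : ℕ, ‖θ (k + 1) - θ k‖ ^ 2
        ≤ η * ∑ i, ((r k i) ^ 2 - (r (k + 1) i) ^ 2) := by
      intro k
      rw [hnorm_sq k, Finset.mul_sum]
      refine Finset.sum_le_sum fun i _ => ?_
      have h := hmain k i
      have h2 : η⁻¹ * (θ (k + 1) i - θ k i) ^ 2 ≤ (r k i) ^ 2 - (r (k + 1) i) ^ 2 := by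
        nlinarith [sq_nonneg (r (k + 1) i - r k i)]
      calc (θ (k + 1) i - θ k i) ^ 2
          = η * (η⁻¹ * (θ (k + 1) i - θ k i) ^ 2) := by
            field_simp
        _ ≤ η * ((r k i) ^ 2 - (r (k + 1) i) ^ 2) :=
            mul_le_mul_of_nonneg_left h2 hη.le
    have hDto : Tendsto (fun k => η * ∑ i, ((r k i) ^ 2 - (r (k + 1) i) ^ 2))
        atTop (𝓝 0) := by
      have : Tendsto (fun k => ∑ i, ((r k i) ^ 2 - (r (k + 1) i) ^ 2)) atTop (𝓝 0) := by
        have h0 : (0:ℝ) = ∑ i : Fin n, ((rstar i)^2 - (rstar i)^2) := by simp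
        rw [h0]
        refine tendsto_finset_sum _ fun i _ => ?_
        exact (((hconv i).pow 2).sub
          (((hconv i).comp (tendsto_add_atTop_nat 1)).pow 2))
      simpa using this.const_mul η
    have hsqto : Tendsto (fun k => ‖θ (k + 1) - θ k‖ ^ 2) atTop (𝓝 0) := by
      refine squeeze_zero (fun k => by positivity) hbound hDto
    have : Tendsto (fun k => Real.sqrt (‖θ (k + 1) - θ k‖ ^ 2)) atTop (𝓝 (Real.sqrt 0)) :=
      (Real.continuous_sqrt.tendsto 0).comp hsqto
    simpa [Real.sqrt_sq (norm_nonneg _)] using this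
  · -- tsum bound
    have hnorm_sq : ∀ k : ℕ, ‖θ (k + 1) - θ k‖ ^ 2
        = ∑ i, (θ (k + 1) i - θ k i) ^ 2 := by
      intro k
      rw [EuclideanSpace.norm_eq]
      rw [Real.sq_sqrt (by positivity)]
      refine Finset.sum_congr rfl fun i _ => ?_
      rw [Real.norm_eq_abs, sq_abs]
      congr 1
    have hbound : ∀ k : ℕ, ‖θ (k + 1) - θ k‖ ^ 2
        ≤ η * ∑ i, ((r k i) ^ 2 - (r (k + 1) i) ^ 2) := by
      intro k
      rw [hnorm_sq k, Finset.mul_sum]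
      refine Finset.sum_le_sum fun i _ => ?_
      have h := hmain k i
      have h2 : η⁻¹ * (θ (k + 1) i - θ k i) ^ 2 ≤ (r k i) ^ 2 - (r (k + 1) i) ^ 2 := by
        nlinarith [sq_nonneg (r (k + 1) i - r k i)]
      calc (θ (k + 1) i - θ k i) ^ 2
          = η * (η⁻¹ * (θ (k + 1) i - θ k i) ^ 2) := by
            field_simp
        _ ≤ η * ((r k i) ^ 2 - (r (k + 1) i) ^ 2) :=
            mul_le_mul_of_nonneg_left h2 hη.le
    refine Real.tsum_le_of_sum_range_le (fun k => by positivity) fun N => ?_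
    calc ∑ j ∈ Finset.range N, ‖θ (j + 1) - θ j‖ ^ 2
        ≤ ∑ j ∈ Finset.range N, η * ∑ i, ((r j i) ^ 2 - (r (j + 1) i) ^ 2) :=
          Finset.sum_le_sum fun j _ => hbound j
      _ = η * ∑ i, ∑ j ∈ Finset.range N, ((r j i) ^ 2 - (r (j + 1) i) ^ 2) := by
          rw [Finset.sum_comm, ← Finset.mul_sum]
      _ = η * ∑ i, ((r 0 i) ^ 2 - (r N i) ^ 2) := by
          congr 1
          exact Finset.sum_congr rfl fun i _ =>
            Finset.sum_range_sub' (fun j => (r j i) ^ 2) N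
      _ ≤ η * ∑ i, ((r 0 i) ^ 2 - (rstar i) ^ 2) := by
          refine mul_le_mul_of_nonneg_left (Finset.sum_le_sum fun i _ => ?_) hη.le
          have : (rstar i) ^ 2 ≤ (r N i) ^ 2 :=
            pow_le_pow_left₀ (hrstar_nn i) (hrstar_le N i) 2
          linarith
end

section
/- Let (θ_k, r_k) be the global AEGD iterates, where f is differentiable and bounded from below with f + c > 0. Then for every k ≥ 1, (1/k) ∑_{j=0}^{k−1} ‖∇g(θ_j)‖² ≤ √(f(θ₀)+c) / (2 η k r_k). -/
open Filter Topology Finset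

/-- For the global AEGD iterates with `f` differentiable and bounded
from below, for every `k ≥ 1`,
`(1/k) ∑_{j=0}^{k−1} ‖∇g(θ_j)‖² ≤ √(f(θ₀)+c) / (2 η k r_k)`. -/
theorem aegd_gradient_bound {n : ℕ} (f : EuclideanSpace ℝ (Fin n) → ℝ)
    (hf : Differentiable ℝ f) (hbdd : ∃ B : ℝ, ∀ x, B ≤ f x)
    (c : ℝ) (hc : 0 < c) (hfc : ∀ x, 0 < f x + c)
    (g : EuclideanSpace ℝ (Fin n) → ℝ) (hg : g = fun x => Real.sqrt (f x + c))
    (η : ℝ) (hη : 0 < η)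
    (θ : ℕ → EuclideanSpace ℝ (Fin n)) (r : ℕ → ℝ)
    (hr0 : r 0 = g (θ 0))
    (hr : ∀ k, r (k + 1) = r k / (1 + 2 * η * ‖gradient g (θ k)‖ ^ 2))
    (hθ : ∀ k, θ (k + 1) = θ k - (2 * η * r (k + 1)) • gradient g (θ k)) :
    ∀ k : ℕ, 1 ≤ k →
      (1 / (k : ℝ)) * ∑ j ∈ Finset.range k, ‖gradient g (θ j)‖ ^ 2
        ≤ Real.sqrt (f (θ 0) + c) / (2 * η * (k : ℝ) * r k) := by
  have hden : ∀ k, 0 < 1 + 2 * η * ‖gradient g (θ k)‖ ^ 2 := by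
    intro k; positivity
  have hrpos : ∀ k, 0 < r k := by
    intro k
    induction k with
    | zero => rw [hr0, hg]; exact Real.sqrt_pos.mpr (hfc _)
    | succ k ih => rw [hr]; exact div_pos ih (hden k)
  have hkey : ∀ k, 2 * η * r (k + 1) * ‖gradient g (θ k)‖ ^ 2 = r k - r (k + 1) := by
    intro k
    have h := hr k
    have hd := (hden k).ne'
    field_simp at h
    nlinarith [h]
  have hmono : ∀ k, r (k + 1) ≤ r k := by
    intro k
    have h := hkey k
    have h2 : 0 ≤ 2 * η * r (k + 1) * ‖gradient g (θ k)‖ ^ 2 := by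
      have := (hrpos (k + 1)).le
      positivity
    linarith
  have hanti : Antitone r := antitone_nat_of_succ_le hmono
  have hsum : ∀ k, 2 * η * r k * ∑ j ∈ Finset.range k, ‖gradient g (θ j)‖ ^ 2 ≤ r 0 := by
    intro k
    have h1 : ∀ j ∈ Finset.range k,
        2 * η * r k * ‖gradient g (θ j)‖ ^ 2 ≤ r j - r (j + 1) := by
      intro j hj
      rw [← hkey j]
      have hjk : r k ≤ r (j + 1) := hanti (Finset.mem_range.mp hj)
      gcongr
    calc 2 * η * r k * ∑ j ∈ Finset.range k, ‖gradient g (θ j)‖ ^ 2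
        = ∑ j ∈ Finset.range k, 2 * η * r k * ‖gradient g (θ j)‖ ^ 2 := by
          rw [Finset.mul_sum]
      _ ≤ ∑ j ∈ Finset.range k, (r j - r (j + 1)) := Finset.sum_le_sum h1
      _ = r 0 - r k := Finset.sum_range_sub' r k
      _ ≤ r 0 := by linarith [(hrpos k).le]
  intro k hk
  have hkpos : (0 : ℝ) < k := by exact_mod_cast hk
  have hr0' : Real.sqrt (f (θ 0) + c) = r 0 := by rw [hr0, hg]
  rw [hr0', one_div, inv_mul_eq_div,
    div_le_div_iff₀ hkpos (by have := hrpos k; positivity : (0 : ℝ) < 2 * η * (k : ℝ) * r k)]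
  nlinarith [mul_le_mul_of_nonneg_left (hsum k) hkpos.le]
end

section
/- Let (θ_k, r_k) be the global AEGD iterates with effective step sizes η_k := η r_{k+1}/g(θ_k). Suppose f is L-smooth, has a minimizer θ* with minimum value f(θ*), and satisfies the Polyak–Łojasiewicz inequality with constant μ > 0. If η_j ≤ 1/L for all j with k₀ ≤ j < k (for some k₀ ≥ 0), then the iterates satisfy ∑_{k=k₀}^{∞} ‖θ_{k+1} − θ_k‖ ≤ (4/√(2μ)) √(f(θ_{k₀}) − f(θ*)); in particular the sequence (θ_k) is convergent. -/
/-! With the effective step `η_k`, the AEGD iterates are plain gradient descent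
`θ_{k+1} = θ_k - η_k ∇f(θ_k)`. For `η_k ≤ 1/L` the descent lemma gives
`f(θ_k) - f(θ_{k+1}) ≥ (η_k / 2) ‖∇f(θ_k)‖²`, and together with the PL inequality this bounds
the step length `η_k ‖∇f(θ_k)‖` by `4/√(2μ)` times the decrease of `√(f(θ_k) - f(θ*))`.
Summing telescopes, so the path has finite length and the iterates form a Cauchy sequence. -/

open Filter Topology Finset

theorem mul_le_div_sqrt_mul_sub_sqrt {μ a G D D' : ℝ} (hμ : 0 < μ) (ha : 0 ≤ a) (hG : 0 ≤ G)
    (hD' : 0 ≤ D') (hdec : a / 2 * G ^ 2 ≤ D - D') (hPL : 2 * μ * D ≤ G ^ 2) :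
    a * G ≤ 4 / √(2 * μ) * (√D - √D') := by
  have hs : 0 < √(2 * μ) := Real.sqrt_pos.mpr (by positivity)
  have hD'D : D' ≤ D := by nlinarith [mul_nonneg ha (sq_nonneg G)]
  have hsqrt_mono : √D' ≤ √D := Real.sqrt_le_sqrt hD'D
  have hsG : √(2 * μ) * √D ≤ G := by
    rw [← Real.sqrt_mul (by positivity), ← Real.sqrt_sq hG]
    exact Real.sqrt_le_sqrt hPL
  have hgap : D - D' = (√D - √D') * (√D + √D') := by
    rw [mul_comm, ← sq_sub_sq, Real.sq_sqrt (hD'.trans hD'D), Real.sq_sqrt hD']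
  have hsq : a * G ^ 2 ≤ 4 * (√D - √D') * √D := by
    nlinarith [mul_le_mul_of_nonneg_left hsqrt_mono (sub_nonneg.mpr hsqrt_mono)]
  rcases hG.eq_or_lt with rfl | hGpos
  · simp only [mul_zero]
    exact mul_nonneg (by positivity) (sub_nonneg.mpr hsqrt_mono)
  · rw [div_mul_eq_mul_div, le_div_iff₀ hs]
    refine le_of_mul_le_mul_right ?_ hGpos
    nlinarith [mul_le_mul_of_nonneg_left hsG
      (mul_nonneg (by norm_num : (0 : ℝ) ≤ 4) (sub_nonneg.mpr hsqrt_mono))]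

section Smooth

open InnerProductSpace

variable {E : Type*} [NormedAddCommGroup E] [InnerProductSpace ℝ E] [CompleteSpace E]

theorem gradient_sqrt_add_const {f : E → ℝ} (hf : Differentiable ℝ f) {c : ℝ}
    (hfc : ∀ x, 0 < f x + c) (x : E) :
    gradient (fun y => √(f y + c)) x = (1 / (2 * √(f x + c))) • gradient f x := by
  have hsqrt := Real.hasDerivAt_sqrt (hfc x).ne'
  have hcomp := hsqrt.comp_hasFDerivAt x ((hf x).hasGradientAt.hasFDerivAt.add_const c)
  refine HasGradientAt.gradient (hasGradientAt_iff_hasFDerivAt.mpr ?_)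
  rwa [map_smul]

theorem le_add_inner_gradient_add_sq {f : E → ℝ} (hf : Differentiable ℝ f) {L : ℝ}
    (hLip : ∀ u v, ‖gradient f u - gradient f v‖ ≤ L * ‖u - v‖) (x y : E) :
    f y ≤ f x + inner ℝ (gradient f x) (y - x) + L / 2 * ‖y - x‖ ^ 2 := by
  set d := y - x
  let φ : ℝ → ℝ := fun t => f (x + t • d) - t * inner ℝ (gradient f x) d - L / 2 * t ^ 2 * ‖d‖ ^ 2
  let φ' : ℝ → ℝ := fun t =>
    inner ℝ (gradient f (x + t • d)) d - inner ℝ (gradient f x) d - L * t * ‖d‖ ^ 2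
  have hφ : ∀ t, HasDerivAt φ (φ' t) t := by
    intro t
    have hline : HasDerivAt (fun s : ℝ => x + s • d) d t := by
      simpa using ((hasDerivAt_id t).smul_const d).const_add x
    have hf' := (hf (x + t • d)).hasGradientAt.hasFDerivAt.comp_hasDerivAt t hline
    have := ((hf'.sub ((hasDerivAt_id t).mul_const (inner ℝ (gradient f x) d))).sub
      (((hasDerivAt_pow 2 t).const_mul (L / 2)).mul_const (‖d‖ ^ 2)))
    refine this.congr_deriv ?_
    simp only [φ', toDual_apply_apply]
    ring
  have hφ'_nonpos : ∀ t ∈ interior (Set.Ici (0 : ℝ)), φ' t ≤ 0 := by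
    intro t ht
    rw [interior_Ici] at ht
    have hnorm : ‖gradient f (x + t • d) - gradient f x‖ ≤ L * (t * ‖d‖) := by
      simpa [norm_smul, abs_of_pos (Set.mem_Ioi.mp ht)] using hLip (x + t • d) x
    have := real_inner_le_norm (gradient f (x + t • d) - gradient f x) d
    rw [inner_sub_left] at this
    nlinarith [mul_le_mul_of_nonneg_right hnorm (norm_nonneg d)]
  have hanti : AntitoneOn φ (Set.Ici 0) :=
    antitoneOn_of_hasDerivWithinAt_nonpos (convex_Ici 0)
      (fun t _ => (hφ t).continuousAt.continuousWithinAt)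
      (fun t _ => (hφ t).hasDerivWithinAt) hφ'_nonpos
  have h01 := hanti Set.self_mem_Ici (zero_le_one' ℝ) zero_le_one
  have hy : x + (1 : ℝ) • d = y := by simp [d]
  simp only [φ, hy, zero_smul, add_zero, zero_mul, sub_zero, one_mul, one_pow, mul_one,
    mul_zero, ne_eq, OfNat.ofNat_ne_zero, not_false_eq_true, zero_pow] at h01
  linarith

theorem apply_sub_smul_gradient_le {f : E → ℝ} (hf : Differentiable ℝ f) {L : ℝ}
    (hLip : ∀ u v, ‖gradient f u - gradient f v‖ ≤ L * ‖u - v‖) (x : E) {a : ℝ}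
    (ha : 0 ≤ a) (haL : a * L ≤ 1) :
    f (x - a • gradient f x) ≤ f x - a / 2 * ‖gradient f x‖ ^ 2 := by
  have h := le_add_inner_gradient_add_sq hf hLip x (x - a • gradient f x)
  rw [sub_sub_cancel_left, inner_neg_right, real_inner_smul_right, real_inner_self_eq_norm_sq,
    norm_neg, norm_smul, Real.norm_of_nonneg ha] at h
  nlinarith [mul_nonneg (mul_nonneg ha (sub_nonneg.mpr haL)) (sq_nonneg ‖gradient f x‖)]

theorem norm_smul_gradient_le_of_PL {f : E → ℝ} (hf : Differentiable ℝ f) {L : ℝ}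
    (hLip : ∀ u v, ‖gradient f u - gradient f v‖ ≤ L * ‖u - v‖) {m μ : ℝ} (hμ : 0 < μ) (x : E)
    {a : ℝ} (ha : 0 ≤ a) (haL : a * L ≤ 1) (hm : m ≤ f (x - a • gradient f x))
    (hPL : μ * (f x - m) ≤ 1 / 2 * ‖gradient f x‖ ^ 2) :
    ‖a • gradient f x‖ ≤
      4 / √(2 * μ) * (√(f x - m) - √(f (x - a • gradient f x) - m)) := by
  rw [norm_smul, Real.norm_of_nonneg ha]
  have hdec := apply_sub_smul_gradient_le hf hLip x ha haL
  exact mul_le_div_sqrt_mul_sub_sqrt hμ ha (norm_nonneg _) (sub_nonneg.mpr hm) (by linarith)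
    (by linarith)

theorem gradient_sqrt_add_const_step_eq {f : E → ℝ} (hf : Differentiable ℝ f) {c : ℝ}
    (hfc : ∀ x, 0 < f x + c) (x : E) (s : ℝ) :
    x - (2 * s) • gradient (fun y => √(f y + c)) x = x - (s / √(f x + c)) • gradient f x := by
  have : √(f x + c) ≠ 0 := (Real.sqrt_pos.mpr (hfc x)).ne'
  rw [gradient_sqrt_add_const hf hfc, smul_smul]
  congr 2
  field_simp

end Smooth

theorem aegd_energy_pos {E : Type*} [Norm E] {η : ℝ} (hη : 0 ≤ η) {v : ℕ → E} {r : ℕ → ℝ}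
    (hr0 : 0 < r 0) (hr : ∀ k, r (k + 1) = r k / (1 + 2 * η * ‖v k‖ ^ 2)) (k : ℕ) : 0 < r k := by
  induction k with
  | zero => exact hr0
  | succ k ih => rw [hr k]; positivity

theorem summable_and_tsum_le_of_le_sub_succ {a b : ℕ → ℝ} (ha : ∀ k, 0 ≤ a k)
    (hb : ∀ k, 0 ≤ b k) (hab : ∀ k, a k ≤ b k - b (k + 1)) :
    Summable a ∧ ∑' k, a k ≤ b 0 := by
  have hpartial : ∀ N, ∑ k ∈ range N, a k ≤ b 0 := fun N =>
    calc ∑ k ∈ range N, a k ≤ ∑ k ∈ range N, (b k - b (k + 1)) := sum_le_sum fun k _ => hab k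
      _ = b 0 - b N := sum_range_sub' b N
      _ ≤ b 0 := sub_le_self _ (hb N)
  exact ⟨summable_of_sum_range_le ha hpartial, Real.tsum_le_of_sum_range_le ha hpartial⟩

theorem exists_tendsto_of_summable_norm_sub_succ {E : Type*} [NormedAddCommGroup E]
    [CompleteSpace E] {x : ℕ → E} (k₀ : ℕ)
    (h : Summable fun k => ‖x (k₀ + k + 1) - x (k₀ + k)‖) : ∃ l, Tendsto x atTop (𝓝 l) := by
  have hcauchy : CauchySeq fun k => x (k₀ + k) :=
    cauchySeq_of_summable_dist (h.congr fun k => by rw [dist_eq_norm', add_assoc])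
  obtain ⟨l, hl⟩ := cauchySeq_tendsto_of_complete hcauchy
  exact ⟨l, (tendsto_add_atTop_iff_nat k₀).mp (by simpa only [add_comm] using hl)⟩

theorem aegd_pl_finite_length_general {n : ℕ} (f : EuclideanSpace ℝ (Fin n) → ℝ)
    (hf : Differentiable ℝ f)
    (c : ℝ) (hfc : ∀ x, 0 < f x + c)
    (g : EuclideanSpace ℝ (Fin n) → ℝ) (hg : g = fun x => Real.sqrt (f x + c))
    (L : ℝ) (hL : 0 < L)
    (hLip : ∀ u v, ‖gradient f u - gradient f v‖ ≤ L * ‖u - v‖)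
    (θstar : EuclideanSpace ℝ (Fin n)) (hmin : ∀ x, f θstar ≤ f x)
    (μ : ℝ) (hμ : 0 < μ)
    (hPL : ∀ x, μ * (f x - f θstar) ≤ 1 / 2 * ‖gradient f x‖ ^ 2)
    (η : ℝ) (hη : 0 < η)
    (θ : ℕ → EuclideanSpace ℝ (Fin n)) (r : ℕ → ℝ)
    (hr0 : r 0 = g (θ 0))
    (hr : ∀ k, r (k + 1) = r k / (1 + 2 * η * ‖gradient g (θ k)‖ ^ 2))
    (hθ : ∀ k, θ (k + 1) = θ k - (2 * η * r (k + 1)) • gradient g (θ k))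
    (ηk : ℕ → ℝ) (hηk : ∀ k, ηk k = η * r (k + 1) / g (θ k))
    (k₀ : ℕ) (hstep : ∀ j, k₀ ≤ j → ηk j ≤ 1 / L) :
    (∑' k : ℕ, ‖θ (k₀ + k + 1) - θ (k₀ + k)‖)
        ≤ 4 / Real.sqrt (2 * μ) * Real.sqrt (f (θ k₀) - f θstar) ∧
    ∃ θlim : EuclideanSpace ℝ (Fin n), Tendsto θ atTop (𝓝 θlim) := by
  subst hg
  have hr_pos := aegd_energy_pos hη.le (hr0 ▸ Real.sqrt_pos.mpr (hfc _)) hr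
  have hηk_nonneg : ∀ k, 0 ≤ ηk k := fun k => by
    rw [hηk]; exact div_nonneg (mul_pos hη (hr_pos _)).le (Real.sqrt_nonneg _)
  have hgd : ∀ k, θ (k + 1) = θ k - ηk k • gradient f (θ k) := fun k => by
    rw [hθ, mul_assoc, gradient_sqrt_add_const_step_eq hf hfc, hηk]
  set C := 4 / √(2 * μ)
  have hlen : ∀ k, ‖θ (k₀ + k + 1) - θ (k₀ + k)‖ ≤
      C * √(f (θ (k₀ + k)) - f θstar) - C * √(f (θ (k₀ + k + 1)) - f θstar) := fun k => by
    rw [← mul_sub, hgd, sub_sub_cancel_left, norm_neg]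
    exact norm_smul_gradient_le_of_PL hf hLip hμ _ (hηk_nonneg _)
      ((le_div_iff₀ hL).mp (hstep _ (Nat.le_add_right _ _))) (hmin _) (hPL _)
  obtain ⟨hsum, htsum⟩ := summable_and_tsum_le_of_le_sub_succ (fun _ => norm_nonneg _)
    (fun k => mul_nonneg (by positivity) (Real.sqrt_nonneg (f (θ (k₀ + k)) - f θstar))) hlen
  exact ⟨htsum, exists_tendsto_of_summable_norm_sub_succ k₀ hsum⟩

/-- For the global AEGD iterates, if `f` is `L`-smooth, has a minimizer
`θ*`, satisfies the PL inequality with constant `μ > 0`, and the effective step sizes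
satisfy `η_j ≤ 1/L` for all `j ≥ k₀`, then
`∑_{k=k₀}^∞ ‖θ_{k+1} − θ_k‖ ≤ (4/√(2μ)) √(f(θ_{k₀}) − f(θ*))`; in particular `(θ_k)`
converges. -/
theorem aegd_pl_finite_length {n : ℕ} (f : EuclideanSpace ℝ (Fin n) → ℝ)
    (hf : Differentiable ℝ f) (hbdd : ∃ B : ℝ, ∀ x, B ≤ f x)
    (c : ℝ) (hc : 0 < c) (hfc : ∀ x, 0 < f x + c)
    (g : EuclideanSpace ℝ (Fin n) → ℝ) (hg : g = fun x => Real.sqrt (f x + c))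
    (L : ℝ) (hL : 0 < L)
    (hLip : ∀ u v, ‖gradient f u - gradient f v‖ ≤ L * ‖u - v‖)
    (θstar : EuclideanSpace ℝ (Fin n)) (hmin : ∀ x, f θstar ≤ f x)
    (μ : ℝ) (hμ : 0 < μ)
    (hPL : ∀ x, μ * (f x - f θstar) ≤ 1 / 2 * ‖gradient f x‖ ^ 2)
    (η : ℝ) (hη : 0 < η)
    (θ : ℕ → EuclideanSpace ℝ (Fin n)) (r : ℕ → ℝ)
    (hr0 : r 0 = g (θ 0))
    (hr : ∀ k, r (k + 1) = r k / (1 + 2 * η * ‖gradient g (θ k)‖ ^ 2))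
    (hθ : ∀ k, θ (k + 1) = θ k - (2 * η * r (k + 1)) • gradient g (θ k))
    (ηk : ℕ → ℝ) (hηk : ∀ k, ηk k = η * r (k + 1) / g (θ k))
    (k₀ : ℕ) (hstep : ∀ j, k₀ ≤ j → ηk j ≤ 1 / L) :
    (∑' k : ℕ, ‖θ (k₀ + k + 1) - θ (k₀ + k)‖)
        ≤ 4 / Real.sqrt (2 * μ) * Real.sqrt (f (θ k₀) - f θstar) ∧
    ∃ θlim : EuclideanSpace ℝ (Fin n), Tendsto θ atTop (𝓝 θlim) :=
  aegd_pl_finite_length_general f hf c hfc g hg L hL hLip θstar hmin μ hμ hPL η hη θ r hr0 hr hθ ηk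
    hηk k₀ hstep
end

section
/- Suppose f : ℝⁿ → ℝ is L-smooth, bounded from below by f(θ*) where θ* is a minimizer, and ‖∇f(θ)‖ ≤ G_∞ for all θ. Let c > 0 satisfy f + c > 0 and set g(θ) = √(f(θ)+c). Then g(θ) ≥ g(θ*) = √(f(θ*)+c) for all θ, and ∇g is Lipschitz continuous with constant L_g := (1/(2g(θ*))) (L + G_∞²/(2 g(θ*)²)). -/
open Filter Topology Finset

/-- If `f` is `L`-smooth, bounded from below by `f(θ*)` where `θ*` is a
minimizer, and `‖∇f(θ)‖ ≤ G_∞` for all `θ`, then `g(θ) = √(f(θ)+c) ≥ g(θ*)` for all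
`θ`, and `∇g` is Lipschitz with constant `L_g = (1/(2g(θ*)))(L + G_∞²/(2g(θ*)²))`. -/
theorem aegd_g_smoothness {n : ℕ} (f : EuclideanSpace ℝ (Fin n) → ℝ)
    (hf : Differentiable ℝ f)
    (L : ℝ) (hL : 0 < L)
    (hLip : ∀ u v, ‖gradient f u - gradient f v‖ ≤ L * ‖u - v‖)
    (θstar : EuclideanSpace ℝ (Fin n)) (hmin : ∀ x, f θstar ≤ f x)
    (G : ℝ) (hG : 0 < G) (hgrad : ∀ x, ‖gradient f x‖ ≤ G)
    (c : ℝ) (hc : 0 < c) (hfc : ∀ x, 0 < f x + c)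
    (g : EuclideanSpace ℝ (Fin n) → ℝ) (hg : g = fun x => Real.sqrt (f x + c))
    (Lg : ℝ)
    (hLg : Lg = 1 / (2 * Real.sqrt (f θstar + c))
      * (L + G ^ 2 / (2 * (Real.sqrt (f θstar + c)) ^ 2))) :
    (∀ x, Real.sqrt (f θstar + c) ≤ g x) ∧
    (∀ u v, ‖gradient g u - gradient g v‖ ≤ Lg * ‖u - v‖) := by
  have hsx : ∀ x, 0 < Real.sqrt (f x + c) := fun x => Real.sqrt_pos.2 (hfc x)
  set s := Real.sqrt (f θstar + c) with hs
  have hs0 : 0 < s := hsx θstar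
  have hlow : ∀ x, s ≤ Real.sqrt (f x + c) := fun x =>
    Real.sqrt_le_sqrt (by linarith [hmin x])
  have hglow : ∀ x, s ≤ g x := by intro x; rw [hg]; exact hlow x
  refine ⟨hglow, ?_⟩
  -- norm of fderiv equals norm of gradient
  have hnorm : ∀ x, ‖fderiv ℝ f x‖ = ‖gradient f x‖ := by
    intro x
    rw [gradient, LinearIsometryEquiv.norm_map]
  -- f is G-Lipschitz
  have hfLip : ∀ u v, ‖f u - f v‖ ≤ G * ‖u - v‖ := by
    intro u v
    exact Convex.norm_image_sub_le_of_norm_fderiv_le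
      (fun x _ => (hf x)) (fun x _ => by rw [hnorm]; exact hgrad x)
      convex_univ (Set.mem_univ v) (Set.mem_univ u)
  -- gradient of g
  have hgradg : ∀ x, gradient g x = (1 / (2 * Real.sqrt (f x + c))) • gradient f x := by
    intro x
    have h1 : HasFDerivAt (fun y => f y + c) (fderiv ℝ f x) x :=
      ((hf x).hasFDerivAt).add_const c
    have h2 : HasDerivAt Real.sqrt (1 / (2 * Real.sqrt (f x + c))) (f x + c) :=
      Real.hasDerivAt_sqrt (ne_of_gt (hfc x))
    have h3 : HasFDerivAt g ((1 / (2 * Real.sqrt (f x + c))) • fderiv ℝ f x) x := by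
      rw [hg]; exact h2.comp_hasFDerivAt x h1
    have h4 := h3.hasGradientAt
    rw [map_smul] at h4
    rw [h4.gradient, gradient]
  intro u v
  rw [hgradg u, hgradg v]
  set su := Real.sqrt (f u + c)
  set sv := Real.sqrt (f v + c)
  have hsu : 0 < su := hsx u
  have hsv : 0 < sv := hsx v
  have hsu' : s ≤ su := hlow u
  have hsv' : s ≤ sv := hlow v
  have key : (1 / (2 * su)) • gradient f u - (1 / (2 * sv)) • gradient f v
      = (1 / (2 * su)) • (gradient f u - gradient f v)
        + (1 / (2 * su) - 1 / (2 * sv)) • gradient f v := by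
    rw [smul_sub, sub_smul]; abel
  rw [key]
  have hterm1 : ‖(1 / (2 * su)) • (gradient f u - gradient f v)‖
      ≤ (1 / (2 * s)) * (L * ‖u - v‖) := by
    rw [norm_smul, Real.norm_eq_abs, abs_of_pos (by positivity)]
    apply mul_le_mul _ (hLip u v) (norm_nonneg _) (by positivity)
    apply div_le_div_of_nonneg_left one_pos.le (by positivity)
    linarith
  have hsdiff : |su - sv| ≤ G * ‖u - v‖ / (2 * s) := by
    have h1 : (su - sv) * (su + sv) = (f u + c) - (f v + c) := by
      have : su ^ 2 = f u + c := Real.sq_sqrt (hfc u).le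
      have : sv ^ 2 = f v + c := Real.sq_sqrt (hfc v).le
      nlinarith [Real.sq_sqrt (hfc u).le, Real.sq_sqrt (hfc v).le]
    have h2 : |su - sv| * (su + sv) ≤ G * ‖u - v‖ := by
      have hle := hfLip u v
      rw [Real.norm_eq_abs] at hle
      have heq : |su - sv| * (su + sv) = |f u - f v| := by
        rw [← abs_of_pos (show (0:ℝ) < su + sv by linarith), ← abs_mul, h1]
        ring_nf
      linarith [heq ▸ hle]
    have h3 : |su - sv| * (2 * s) ≤ |su - sv| * (su + sv) :=
      mul_le_mul_of_nonneg_left (by linarith) (abs_nonneg _)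
    rw [le_div_iff₀ (by positivity)]
    linarith
  have hterm2 : ‖(1 / (2 * su) - 1 / (2 * sv)) • gradient f v‖
      ≤ G ^ 2 * ‖u - v‖ / (4 * s ^ 3) := by
    rw [norm_smul, Real.norm_eq_abs]
    have habs : |1 / (2 * su) - 1 / (2 * sv)| = |su - sv| / (2 * su * sv) := by
      have heq : 1 / (2 * su) - 1 / (2 * sv) = (sv - su) / (2 * su * sv) := by
        field_simp
      rw [heq, abs_div, abs_of_pos (show (0:ℝ) < 2 * su * sv by positivity), abs_sub_comm]
    rw [habs]
    have hb1 : |su - sv| / (2 * su * sv) ≤ (G * ‖u - v‖ / (2 * s)) / (2 * s * s) := by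
      apply div_le_div₀ (by positivity) hsdiff (by positivity)
      have : s * s ≤ su * sv := mul_le_mul hsu' hsv' hs0.le hsu.le
      nlinarith
    calc |su - sv| / (2 * su * sv) * ‖gradient f v‖
        ≤ (G * ‖u - v‖ / (2 * s)) / (2 * s * s) * G :=
          mul_le_mul hb1 (hgrad v) (norm_nonneg _) (by positivity)
      _ = G ^ 2 * ‖u - v‖ / (4 * s ^ 3) := by ring
  calc ‖(1 / (2 * su)) • (gradient f u - gradient f v)
        + (1 / (2 * su) - 1 / (2 * sv)) • gradient f v‖
      ≤ (1 / (2 * s)) * (L * ‖u - v‖) + G ^ 2 * ‖u - v‖ / (4 * s ^ 3) :=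
        le_trans (norm_add_le _ _) (add_le_add hterm1 hterm2)
    _ = Lg * ‖u - v‖ := by rw [hLg]; field_simp; ring
end

section
/- Let (θ_k, r_{k,i}) be the element-wise AEGD iterates, where f is differentiable and bounded from below with f + c > 0. Then for every k ≥ 1 and every coordinate i ∈ {1,…,n}: min_{0≤j<k} (∂_i g(θ_j))² ≤ (1/k) ∑_{j=0}^{k−1} (∂_i g(θ_j))² ≤ √(f(θ₀)+c) / (2 η k r_{k,i}). -/
open Filter Topology Finset

/-- For the element-wise AEGD iterates with `f` differentiable and
bounded from below, for every `k ≥ 1` and every coordinate `i`,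
`min_{0≤j<k} (∂_i g(θ_j))² ≤ (1/k) ∑_{j=0}^{k−1} (∂_i g(θ_j))²
  ≤ √(f(θ₀)+c)/(2 η k r_{k,i})`. -/
theorem aegd_elementwise_gradient_bound {n : ℕ} (f : EuclideanSpace ℝ (Fin n) → ℝ)
    (hf : Differentiable ℝ f) (hbdd : ∃ B : ℝ, ∀ x, B ≤ f x)
    (c : ℝ) (hc : 0 < c) (hfc : ∀ x, 0 < f x + c)
    (g : EuclideanSpace ℝ (Fin n) → ℝ) (hg : g = fun x => Real.sqrt (f x + c))
    (η : ℝ) (hη : 0 < η)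
    (θ : ℕ → EuclideanSpace ℝ (Fin n)) (r : ℕ → Fin n → ℝ)
    (hr0 : ∀ i, r 0 i = g (θ 0))
    (hr : ∀ k i, r (k + 1) i = r k i / (1 + 2 * η * (gradient g (θ k) i) ^ 2))
    (hθ : ∀ k i, θ (k + 1) i = θ k i - 2 * η * r (k + 1) i * gradient g (θ k) i)
    (k : ℕ) (hk : 0 < k) (i : Fin n) :
    (Finset.range k).inf' (Finset.nonempty_range_iff.mpr hk.ne')
        (fun j => (gradient g (θ j) i) ^ 2)
      ≤ (1 / (k : ℝ)) * ∑ j ∈ Finset.range k, (gradient g (θ j) i) ^ 2 ∧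
    (1 / (k : ℝ)) * ∑ j ∈ Finset.range k, (gradient g (θ j) i) ^ 2
      ≤ Real.sqrt (f (θ 0) + c) / (2 * η * (k : ℝ) * r k i) := by
  set G : ℕ → ℝ := fun j => gradient g (θ j) i with hG
  have hden : ∀ j, (0:ℝ) < 1 + 2 * η * G j ^ 2 := by
    intro j; nlinarith [sq_nonneg (G j)]
  have hrpos : ∀ m, 0 < r m i := by
    intro m
    induction m with
    | zero =>
      rw [hr0, hg]
      exact Real.sqrt_pos.mpr (hfc _)
    | succ m ih =>
      rw [hr]
      exact div_pos ih (hden m)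
  have hmono : ∀ j m, j ≤ m → r m i ≤ r j i := by
    intro j m hjm
    induction m with
    | zero => simp_all
    | succ m ih =>
      rcases Nat.lt_or_ge j (m+1) with h | h
      · have h1 : r (m+1) i ≤ r m i := by
          rw [hr]
          apply div_le_self (hrpos m).le
          nlinarith [sq_nonneg (G m)]
        exact h1.trans (ih (Nat.lt_succ_iff.mp h))
      · have : j = m + 1 := le_antisymm hjm h
        simp [this]
  have hstep : ∀ j, 2 * η * G j ^ 2 * r (j+1) i = r j i - r (j+1) i := by
    intro j
    have h := hr j i
    have hd := (hden j).ne'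
    field_simp at h
    nlinarith [h]
  have hS0 : (0:ℝ) ≤ ∑ j ∈ Finset.range k, G j ^ 2 :=
    Finset.sum_nonneg fun j _ => sq_nonneg _
  have hsum : 2 * η * r k i * ∑ j ∈ Finset.range k, G j ^ 2 ≤ r 0 i := by
    have h1 : ∑ j ∈ Finset.range k, 2 * η * G j ^ 2 * r k i
        ≤ ∑ j ∈ Finset.range k, 2 * η * G j ^ 2 * r (j+1) i := by
      apply Finset.sum_le_sum
      intro j hj
      have hjk : j + 1 ≤ k := Finset.mem_range.mp hj
      exact mul_le_mul_of_nonneg_left (hmono (j+1) k hjk) (by positivity)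
    have h2 : ∑ j ∈ Finset.range k, 2 * η * G j ^ 2 * r (j+1) i
        = r 0 i - r k i := by
      rw [Finset.sum_congr rfl fun j _ => hstep j]
      exact Finset.sum_range_sub' (fun m => r m i) k
    have h3 : ∑ j ∈ Finset.range k, 2 * η * G j ^ 2 * r k i
        = 2 * η * r k i * ∑ j ∈ Finset.range k, G j ^ 2 := by
      rw [Finset.mul_sum]; exact Finset.sum_congr rfl fun j _ => by ring
    nlinarith [hrpos k]
  have hkpos : (0:ℝ) < (k:ℝ) := Nat.cast_pos.mpr hk
  constructor
  · rw [mul_comm, ← div_eq_mul_one_div, le_div_iff₀ hkpos]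
    have := Finset.card_nsmul_le_sum (Finset.range k)
      (fun j => G j ^ 2)
      ((Finset.range k).inf' (Finset.nonempty_range_iff.mpr hk.ne') (fun j => G j ^ 2))
      (fun j hj => Finset.inf'_le _ hj)
    simpa [nsmul_eq_mul, mul_comm] using this
  · have hr0' : r 0 i = Real.sqrt (f (θ 0) + c) := by rw [hr0, hg]
    rw [← hr0']
    rw [mul_comm, ← div_eq_mul_one_div, div_le_div_iff₀ hkpos (mul_pos (by positivity) (hrpos k))]
    have hrk := hrpos k
    nlinarith [mul_le_mul_of_nonneg_left hsum hkpos.le]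
end

section
/- Let v_k ∈ ℝⁿ be an arbitrary sequence of search directions and define iterates by the generalized AEGD update: r_{k+1,i} = r_{k,i} / (1 + 2η v_{k,i}²) and θ_{k+1,i} = θ_{k,i} − 2η r_{k+1,i} v_{k,i}, with arbitrary initial values r_{0,i} ≥ 0. Then for every step size η > 0, every k ≥ 0 and every i ∈ {1,…,n}: r_{k+1,i}² = r_{k,i}² − (r_{k+1,i} − r_{k,i})² − η⁻¹ (θ_{k+1,i} − θ_{k,i})²; consequently each r_{k,i} is non-increasing in k and ∑_{j=0}^{∞} (θ_{j+1,i} − θ_{j,i})² ≤ η r_{0,i}². -/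
open Filter Topology Finset

/-- For the generalized (stochastic) AEGD update driven by arbitrary
search directions `v_k`, for every step size `η > 0`, every `k ≥ 0` and every `i`:
`r_{k+1,i}² = r_{k,i}² − (r_{k+1,i} − r_{k,i})² − η⁻¹ (θ_{k+1,i} − θ_{k,i})²`;
consequently each `r_{k,i}` is non-increasing in `k` and
`∑_{j=0}^∞ (θ_{j+1,i} − θ_{j,i})² ≤ η r_{0,i}²`. -/
theorem aegd_generalized_energy_stability {n : ℕ}
    (η : ℝ) (hη : 0 < η)
    (v : ℕ → Fin n → ℝ) (θ : ℕ → Fin n → ℝ) (r : ℕ → Fin n → ℝ)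
    (hr0 : ∀ i, 0 ≤ r 0 i)
    (hr : ∀ k i, r (k + 1) i = r k i / (1 + 2 * η * (v k i) ^ 2))
    (hθ : ∀ k i, θ (k + 1) i = θ k i - 2 * η * r (k + 1) i * v k i) :
    (∀ k : ℕ, ∀ i : Fin n, (r (k + 1) i) ^ 2
      = (r k i) ^ 2 - (r (k + 1) i - r k i) ^ 2 - η⁻¹ * (θ (k + 1) i - θ k i) ^ 2) ∧
    (∀ k i, r (k + 1) i ≤ r k i) ∧
    (∀ i, ∑' j : ℕ, (θ (j + 1) i - θ j i) ^ 2 ≤ η * (r 0 i) ^ 2) := by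
  have hden : ∀ k i, (0:ℝ) < 1 + 2 * η * (v k i) ^ 2 := by
    intro k i
    have : 0 ≤ 2 * η * (v k i) ^ 2 := by positivity
    linarith
  have hrk : ∀ k i, r k i = r (k + 1) i * (1 + 2 * η * (v k i) ^ 2) := by
    intro k i
    rw [hr k i]
    field_simp
  have hE : ∀ k : ℕ, ∀ i : Fin n, (r (k + 1) i) ^ 2
      = (r k i) ^ 2 - (r (k + 1) i - r k i) ^ 2 - η⁻¹ * (θ (k + 1) i - θ k i) ^ 2 := by
    intro k i
    rw [hθ k i, hrk k i]
    field_simp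
    ring
  have hnn : ∀ k i, 0 ≤ r k i := by
    intro k
    induction k with
    | zero => exact hr0
    | succ k ih =>
      intro i
      rw [hr k i]
      exact div_nonneg (ih i) (hden k i).le
  have hmono : ∀ k i, r (k + 1) i ≤ r k i := by
    intro k i
    rw [hr k i]
    apply div_le_self (hnn k i)
    nlinarith [sq_nonneg (v k i)]
  refine ⟨hE, hmono, fun i => ?_⟩
  have hpart : ∀ N : ℕ, ∑ j ∈ range N, (θ (j + 1) i - θ j i) ^ 2 ≤ η * (r 0 i) ^ 2 := by
    intro N
    have key : ∀ j, (θ (j + 1) i - θ j i) ^ 2 ≤ η * ((r j i) ^ 2 - (r (j + 1) i) ^ 2) := by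
      intro j
      have := hE j i
      have h2 : η⁻¹ * (θ (j + 1) i - θ j i) ^ 2 ≤ (r j i) ^ 2 - (r (j + 1) i) ^ 2 := by
        nlinarith [sq_nonneg (r (j + 1) i - r j i)]
      calc (θ (j + 1) i - θ j i) ^ 2 = η * (η⁻¹ * (θ (j + 1) i - θ j i) ^ 2) := by
            field_simp
        _ ≤ η * ((r j i) ^ 2 - (r (j + 1) i) ^ 2) := by
            exact mul_le_mul_of_nonneg_left h2 hη.le
    calc ∑ j ∈ range N, (θ (j + 1) i - θ j i) ^ 2
        ≤ ∑ j ∈ range N, η * ((r j i) ^ 2 - (r (j + 1) i) ^ 2) :=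
          Finset.sum_le_sum fun j _ => key j
      _ = η * ∑ j ∈ range N, ((r j i) ^ 2 - (r (j + 1) i) ^ 2) := by
          rw [Finset.mul_sum]
      _ = η * ((r 0 i) ^ 2 - (r N i) ^ 2) := by
          rw [Finset.sum_range_sub' (fun j => (r j i) ^ 2)]
      _ ≤ η * (r 0 i) ^ 2 := by nlinarith [sq_nonneg (r N i)]
  have hsum : Summable (fun j : ℕ => (θ (j + 1) i - θ j i) ^ 2) :=
    summable_of_sum_range_le (fun j => sq_nonneg _) hpart
  exact Summable.tsum_le_of_sum_range_le hsum hpart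
end

section
/- Let v_k ∈ ℝⁿ be a sequence of search directions satisfying v_{k,i}² ≤ G_∞²/(4a) for all k and all i ∈ {1,…,n} (for constants G_∞ > 0, a > 0), and define iterates by r_{k+1,i} = r_{k,i} / (1 + 2η v_{k,i}²), θ_{k+1,i} = θ_{k,i} − 2η r_{k+1,i} v_{k,i}, with r_{0,i} > 0. Then for each j and i: r_{j,i} − r_{j+1,i} = 2η r_{j,i} v_{j,i}²/(1 + 2η v_{j,i}²) ≥ (4aη/(2a + ηG_∞²)) r_{j,i} v_{j,i}², and consequently for every k ≥ 1, (1/k) ∑_{j=0}^{k−1} v_{j,i}² ≤ C_i / (k r_{k,i}), where C_i := r_{0,i}(2a + ηG_∞²)/(4aη). -/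
open Filter Topology Finset

/-- For the generalized (stochastic) AEGD update with bounded search
directions `v_{k,i}² ≤ G_∞²/(4a)`, for each `j` and `i`:
`r_{j,i} − r_{j+1,i} = 2η r_{j,i} v_{j,i}²/(1 + 2η v_{j,i}²)
  ≥ (4aη/(2a + ηG_∞²)) r_{j,i} v_{j,i}²`, and for every `k ≥ 1`,
`(1/k) ∑_{j=0}^{k−1} v_{j,i}² ≤ C_i/(k r_{k,i})` with
`C_i := r_{0,i}(2a + ηG_∞²)/(4aη)`. -/
theorem aegd_stochastic_rate {n : ℕ}
    (η : ℝ) (hη : 0 < η)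
    (G : ℝ) (hG : 0 < G) (a : ℝ) (ha : 0 < a)
    (v : ℕ → Fin n → ℝ) (hv : ∀ k i, (v k i) ^ 2 ≤ G ^ 2 / (4 * a))
    (θ : ℕ → Fin n → ℝ) (r : ℕ → Fin n → ℝ)
    (hr0 : ∀ i, 0 < r 0 i)
    (hr : ∀ k i, r (k + 1) i = r k i / (1 + 2 * η * (v k i) ^ 2))
    (hθ : ∀ k i, θ (k + 1) i = θ k i - 2 * η * r (k + 1) i * v k i) :
    (∀ j : ℕ, ∀ i : Fin n,
      r j i - r (j + 1) i = 2 * η * r j i * (v j i) ^ 2 / (1 + 2 * η * (v j i) ^ 2) ∧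
      4 * a * η / (2 * a + η * G ^ 2) * (r j i * (v j i) ^ 2)
        ≤ r j i - r (j + 1) i) ∧
    (∀ k : ℕ, 1 ≤ k → ∀ i : Fin n,
      (1 / (k : ℝ)) * ∑ j ∈ Finset.range k, (v j i) ^ 2
        ≤ (r 0 i * (2 * a + η * G ^ 2) / (4 * a * η)) / ((k : ℝ) * r k i)) := by
  have hDpos : ∀ k i, (0:ℝ) < 1 + 2 * η * (v k i) ^ 2 := fun k i => by positivity
  have hrpos : ∀ k i, 0 < r k i := by
    intro k i
    induction k with
    | zero => exact hr0 i
    | succ k ih => rw [hr]; exact div_pos ih (hDpos k i)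
  have hden : (0:ℝ) < 2 * a + η * G ^ 2 := by positivity
  have key : ∀ j : ℕ, ∀ i : Fin n,
      r j i - r (j + 1) i = 2 * η * r j i * (v j i) ^ 2 / (1 + 2 * η * (v j i) ^ 2) ∧
      4 * a * η / (2 * a + η * G ^ 2) * (r j i * (v j i) ^ 2)
        ≤ r j i - r (j + 1) i := by
    intro j i
    have hD := hDpos j i
    have heq : r j i - r (j + 1) i
        = 2 * η * r j i * (v j i) ^ 2 / (1 + 2 * η * (v j i) ^ 2) := by
      rw [hr]; field_simp; ring
    refine ⟨heq, ?_⟩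
    rw [heq, div_mul_eq_mul_div, div_le_div_iff₀ hden hD]
    have h2 : 4 * a * (v j i) ^ 2 ≤ G ^ 2 := by
      have := hv j i
      rw [le_div_iff₀ (by positivity : (0:ℝ) < 4 * a)] at this
      nlinarith
    have hb : 2 * a * (1 + 2 * η * (v j i) ^ 2) ≤ 2 * a + η * G ^ 2 := by nlinarith
    have h3 : (0:ℝ) ≤ 2 * η * (r j i * (v j i) ^ 2) := 
      mul_nonneg (by positivity) (mul_nonneg (hrpos j i).le (sq_nonneg _))
    nlinarith [mul_le_mul_of_nonneg_left hb h3]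
  refine ⟨key, ?_⟩
  intro k hk i
  have hc : (0:ℝ) < 4 * a * η / (2 * a + η * G ^ 2) := by positivity
  set c : ℝ := 4 * a * η / (2 * a + η * G ^ 2) with hcdef
  -- r is antitone in k
  have hmono : ∀ j m : ℕ, j ≤ m → r m i ≤ r j i := by
    intro j m hjm
    induction m with
    | zero => simp_all
    | succ m ih =>
      rcases Nat.lt_or_ge j (m+1) with h | h
      · have := ih (Nat.lt_succ_iff.mp h)
        calc r (m+1) i ≤ r m i := by
              rw [hr]
              exact div_le_self (le_of_lt (hrpos m i)) (by nlinarith [sq_nonneg (v m i), hη.le])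
          _ ≤ r j i := this
      · have : j = m + 1 := le_antisymm hjm h
        rw [this]
  -- key summed: c * r k i * ∑ v² ≤ r 0 i
  have hsum : c * r k i * ∑ j ∈ Finset.range k, (v j i) ^ 2 ≤ r 0 i := by
    have step : ∀ j ∈ Finset.range k, c * r k i * (v j i) ^ 2 ≤ r j i - r (j+1) i := by
      intro j hj
      have hjk : j ≤ k := le_of_lt (Finset.mem_range.mp hj)
      have h1 : c * (r k i * (v j i) ^ 2) ≤ c * (r j i * (v j i) ^ 2) := by
        apply mul_le_mul_of_nonneg_left _ hc.le
        exact mul_le_mul_of_nonneg_right (hmono j k hjk) (sq_nonneg _)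
      have h2 := (key j i).2
      calc c * r k i * (v j i) ^ 2 = c * (r k i * (v j i) ^ 2) := by ring
        _ ≤ c * (r j i * (v j i) ^ 2) := h1
        _ ≤ r j i - r (j+1) i := h2
    calc c * r k i * ∑ j ∈ Finset.range k, (v j i) ^ 2
        = ∑ j ∈ Finset.range k, c * r k i * (v j i) ^ 2 := by rw [Finset.mul_sum]
      _ ≤ ∑ j ∈ Finset.range k, (r j i - r (j+1) i) := Finset.sum_le_sum step
      _ = r 0 i - r k i := by rw [Finset.sum_range_sub' (fun j => r j i)]
      _ ≤ r 0 i := by linarith [hrpos k i]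
  have hkpos : (0:ℝ) < (k:ℝ) := by exact_mod_cast hk
  have hrk := hrpos k i
  have hsum' : 4 * a * η * (r k i * ∑ j ∈ Finset.range k, (v j i) ^ 2)
      ≤ r 0 i * (2 * a + η * G ^ 2) := by
    have h := mul_le_mul_of_nonneg_right hsum hden.le
    rw [hcdef] at h
    have : 4 * a * η / (2 * a + η * G ^ 2) * r k i *
        (∑ j ∈ Finset.range k, (v j i) ^ 2) * (2 * a + η * G ^ 2)
        = 4 * a * η * (r k i * ∑ j ∈ Finset.range k, (v j i) ^ 2) := by
      field_simp
    linarith [this ▸ h]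
  have h1 : (1 / (k:ℝ)) * ∑ j ∈ Finset.range k, (v j i) ^ 2
      = (∑ j ∈ Finset.range k, (v j i) ^ 2) / (k:ℝ) := by ring
  rw [h1, div_le_div_iff₀ hkpos (by positivity)]
  have h4 : (0:ℝ) < 4 * a * η := by positivity
  rw [div_mul_eq_mul_div, le_div_iff₀ h4]
  nlinarith [mul_le_mul_of_nonneg_right hsum' hkpos.le]
end
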